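/- arXiv:1603.03891 — 4 statements merged into one kernel-verified Lean document; each statement's English description precedes it below -/
import Mathlib

section
/- If A(ε) has a Laurent (h_A, k_A)-expansion and B(ε) has a pivotal Laurent (h_B, k_B)-expansion, then there exists 0 < ε'₀ ≤ ε₀ such that B(ε) ≠ 0 on (0, ε'₀], and the quotient A(ε)/B(ε) has a Laurent (h_D, k_D)-expansion with h_D = h_A - h_B and k_D = min(k_A - h_B, h_A + k_B - 2h_B), whose coefficients satisfy the recursion d_{h_D + r} = (1/b_{h_B})(a_{h_A + r} - Σ_{1 ≤ i ≤ r} b_{h_B + i} d_{h_D + r - i}). -/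
/-!
Divide formally first. Let `α`, `β` be the power series whose coefficients are those of `A`
and `B` read from their leading indices; the recursion says exactly that `d` read from `h_D`
is `δ = α / β`. Both expansions are first truncated to the common length `N = k_D - h_D`;
then the degree-`N` truncations satisfy `α_N - δ_N β_N = O(X^(N+1))`. With `S_A, S_B, S_D`
the partial sums, `A - S_D B = (A - S_A) + (S_A - S_D S_B) - S_D (B - S_B) = o(ε^(h_A + N))`,
and dividing by `B ~ b_{h_B} ε^{h_B}` gives `A / B - S_D = o(ε^(h_D + N))`.
-/

open Filter Set

/-- A Laurent `(h,k)`-asymptotic expansion of `A` at `0⁺`: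
`(A ε - ∑_{l=h}^{k} a_l ε^l)/ε^k → 0` as `ε → 0⁺`. -/
def IsLaurentExpansion (A : ℝ → ℝ) (h k : ℤ) (a : ℤ → ℝ) : Prop :=
  h ≤ k ∧
    Tendsto (fun ε : ℝ => (A ε - ∑ l ∈ Finset.Icc h k, a l * ε ^ l) / ε ^ k)
      (nhdsWithin 0 (Set.Ioi 0)) (nhds 0)

open Asymptotics Topology
open scoped PowerSeries Polynomial

theorem Finset.sum_Icc_int_eq_sum_range {M : Type*} [AddCommMonoid M] (f : ℤ → M) (h : ℤ)
    (n : ℕ) : ∑ i ∈ Finset.Icc h (h + n), f i = ∑ j ∈ Finset.range (n + 1), f (h + j) := by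
  refine (Finset.sum_nbij' (fun j : ℕ => h + j) (fun i => (i - h).toNat)
    ?_ ?_ ?_ ?_ ?_).symm <;> intros <;> simp_all only [Finset.mem_Icc, Finset.mem_range] <;> omega

theorem zpow_isLittleO_zpow {m n : ℤ} (hnm : n < m) :
    (fun ε : ℝ => ε ^ m) =o[𝓝[>] 0] fun ε => ε ^ n := by
  have hpos : ∀ᶠ ε : ℝ in 𝓝[>] 0, ε ≠ 0 :=
    eventually_mem_nhdsWithin.mono fun _ h => ne_of_gt h
  rw [isLittleO_iff_tendsto' (hpos.mono fun ε hε h => absurd h (zpow_ne_zero _ hε))]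
  have hcont : Tendsto (fun ε : ℝ => ε ^ (m - n)) (𝓝[>] 0) (𝓝 0) := by
    have := (continuousAt_zpow₀ (0 : ℝ) (m - n) (Or.inr (by omega))).tendsto
    rw [zero_zpow _ (by omega)] at this
    exact this.mono_left nhdsWithin_le_nhds
  refine hcont.congr' (hpos.mono fun ε hε => ?_)
  rw [zpow_sub₀ hε]

theorem zpow_isBigO_zpow {m n : ℤ} (hnm : n ≤ m) :
    (fun ε : ℝ => ε ^ m) =O[𝓝[>] 0] fun ε => ε ^ n := by
  rcases hnm.lt_or_eq with hlt | rfl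
  · exact (zpow_isLittleO_zpow hlt).isBigO
  · exact isBigO_refl _ _

noncomputable def laurentSum (c : ℤ → ℝ) (h k : ℤ) (ε : ℝ) : ℝ :=
  ∑ l ∈ Finset.Icc h k, c l * ε ^ l

theorem laurentSum_add_laurentSum {c : ℤ → ℝ} {h m k : ℤ} (hm : h ≤ m + 1) (hk : m ≤ k)
    (ε : ℝ) : laurentSum c h m ε + laurentSum c (m + 1) k ε = laurentSum c h k ε := by
  rw [laurentSum, laurentSum, laurentSum, ← Finset.sum_union]
  · congr 1; ext; simp only [Finset.mem_union, Finset.mem_Icc]; omega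
  · rw [Finset.disjoint_left]; intro; simp only [Finset.mem_Icc]; omega

theorem laurentSum_self (c : ℤ → ℝ) (h : ℤ) (ε : ℝ) : laurentSum c h h ε = c h * ε ^ h := by
  simp [laurentSum]

theorem laurentSum_isBigO (c : ℤ → ℝ) (h k : ℤ) :
    laurentSum c h k =O[𝓝[>] 0] fun ε => ε ^ h := by
  refine IsBigO.fun_sum fun l hl => ?_
  exact (isBigO_refl _ _).const_mul_left (c l) |>.trans
    (zpow_isBigO_zpow (Finset.mem_Icc.1 hl).1)

theorem isLaurentExpansion_iff {A : ℝ → ℝ} {h k : ℤ} {a : ℤ → ℝ} :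
    IsLaurentExpansion A h k a ↔
      h ≤ k ∧ (fun ε => A ε - laurentSum a h k ε) =o[𝓝[>] 0] fun ε => ε ^ k := by
  rw [IsLaurentExpansion, isLittleO_iff_tendsto']
  · rfl
  · exact eventually_mem_nhdsWithin.mono fun ε hε h => absurd h (zpow_ne_zero _ (ne_of_gt hε))

namespace IsLaurentExpansion

variable {A : ℝ → ℝ} {h k : ℤ} {a : ℤ → ℝ}

theorem of_le {m : ℤ} (hA : IsLaurentExpansion A h k a) (hm : h ≤ m) (hmk : m ≤ k) :
    IsLaurentExpansion A h m a := by
  obtain ⟨-, hrem⟩ := isLaurentExpansion_iff.1 hA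
  refine isLaurentExpansion_iff.2 ⟨hm, ?_⟩
  have htail : laurentSum a (m + 1) k =o[𝓝[>] 0] fun ε => ε ^ m :=
    (laurentSum_isBigO a (m + 1) k).trans_isLittleO (zpow_isLittleO_zpow (by omega))
  refine ((hrem.trans_isBigO (zpow_isBigO_zpow hmk)).add htail).congr_left fun ε => ?_
  rw [← laurentSum_add_laurentSum (by omega) hmk]
  ring

theorem isEquivalent (hA : IsLaurentExpansion A h k a) (ha : a h ≠ 0) :
    A ~[𝓝[>] 0] fun ε => a h * ε ^ h := by
  obtain ⟨-, hrem⟩ := isLaurentExpansion_iff.1 (hA.of_le le_rfl hA.1)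
  simp only [laurentSum_self] at hrem
  exact hrem.trans_isBigO ((isBigO_refl _ _).const_mul_right ha)

theorem eventually_ne_zero (hA : IsLaurentExpansion A h k a) (ha : a h ≠ 0) :
    ∀ᶠ ε in 𝓝[>] 0, A ε ≠ 0 := by
  filter_upwards [(hA.isEquivalent ha).isBigO_symm.eq_zero_imp, self_mem_nhdsWithin]
    with ε himp hε hA0
  exact mul_ne_zero ha (zpow_ne_zero _ (ne_of_gt hε)) (himp hA0)

theorem inv_isBigO (hA : IsLaurentExpansion A h k a) (ha : a h ≠ 0) :
    (fun ε => (A ε)⁻¹) =O[𝓝[>] 0] fun ε => ε ^ (-h) := by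
  refine (hA.isEquivalent ha).inv.isBigO.trans ?_
  refine ((isBigO_refl (fun ε : ℝ => (ε ^ h)⁻¹) _).const_mul_left (a h)⁻¹).congr ?_ ?_ <;>
    intro ε <;> simp [mul_comm]

end IsLaurentExpansion

noncomputable def coeffSeries (c : ℤ → ℝ) (h : ℤ) : ℝ⟦X⟧ :=
  PowerSeries.mk fun j => c (h + j)

theorem laurentSum_eq_zpow_mul_eval_trunc (c : ℤ → ℝ) (h : ℤ) (n : ℕ) {ε : ℝ} (hε : ε ≠ 0) :
    laurentSum c h (h + n) ε =
      ε ^ h * (PowerSeries.trunc (n + 1) (coeffSeries c h)).eval ε := by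
  rw [laurentSum, Finset.sum_Icc_int_eq_sum_range, Polynomial.eval,
    PowerSeries.eval₂_trunc_eq_sum_range, Finset.mul_sum]
  refine Finset.sum_congr rfl fun j _ => ?_
  simp only [coeffSeries, PowerSeries.coeff_mk, RingHom.id_apply, zpow_add₀ hε, zpow_natCast]
  ring

theorem PowerSeries.isBigO_eval_trunc_mul_sub {𝕜 : Type*} [NormedField 𝕜] (f g : 𝕜⟦X⟧)
    (n : ℕ) :
    (fun x => (trunc n (f * g)).eval x - (trunc n f).eval x * (trunc n g).eval x)
      =O[𝓝 0] fun x => x ^ n := by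
  set P := trunc n f * trunc n g
  obtain ⟨Q, hQ⟩ : Polynomial.X ^ n ∣ trunc n (P : 𝕜⟦X⟧) - P := by
    refine Polynomial.X_pow_dvd_iff.2 fun i hi => ?_
    simp [coeff_trunc, hi]
  have heval : ∀ x, (trunc n (f * g)).eval x - (trunc n f).eval x * (trunc n g).eval x =
      x ^ n * Q.eval x := by
    intro x
    rw [← trunc_trunc_mul_trunc, ← Polynomial.coe_mul, ← Polynomial.eval_mul,
      ← Polynomial.eval_sub, hQ]
    simp
  simp only [heval]
  simpa using (isBigO_refl (fun x : 𝕜 => x ^ n) _).mul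
    (Filter.Tendsto.isBigO_one (F := 𝕜) (Q.continuous.tendsto 0))

section Quotient

variable {A B : ℝ → ℝ} {a b d : ℤ → ℝ} {hA hB : ℤ}

theorem laurentSum_sub_laurentSum_mul_isBigO
    (hmul : coeffSeries d (hA - hB) * coeffSeries b hB = coeffSeries a hA) (n : ℕ) :
    (fun ε => laurentSum a hA (hA + n) ε -
        laurentSum d (hA - hB) (hA - hB + n) ε * laurentSum b hB (hB + n) ε)
      =O[𝓝[>] 0] fun ε => ε ^ (hA + n + 1) := by
  have hpoly := (isBigO_refl (fun ε : ℝ => ε ^ hA) (𝓝[>] 0)).mul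
    ((PowerSeries.isBigO_eval_trunc_mul_sub (coeffSeries d (hA - hB)) (coeffSeries b hB)
      (n + 1)).mono nhdsWithin_le_nhds)
  rw [hmul] at hpoly
  refine hpoly.congr' ?_ ?_ <;> filter_upwards [self_mem_nhdsWithin] with ε (hε : 0 < ε)
  · simp only [laurentSum_eq_zpow_mul_eval_trunc _ _ _ hε.ne']
    rw [show ε ^ hA = ε ^ (hA - hB) * ε ^ hB by rw [← zpow_add₀ hε.ne', sub_add_cancel]]
    ring
  · rw [← zpow_natCast, ← zpow_add₀ hε.ne']
    push_cast
    ring_nf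

theorem isLittleO_sub_laurentSum_mul {n : ℕ}
    (hAexp : IsLaurentExpansion A hA (hA + n) a) (hBexp : IsLaurentExpansion B hB (hB + n) b)
    (hmul : coeffSeries d (hA - hB) * coeffSeries b hB = coeffSeries a hA) :
    (fun ε => A ε - laurentSum d (hA - hB) (hA - hB + n) ε * B ε)
      =o[𝓝[>] 0] fun ε => ε ^ (hA + n) := by
  obtain ⟨-, hremA⟩ := isLaurentExpansion_iff.1 hAexp
  obtain ⟨-, hremB⟩ := isLaurentExpansion_iff.1 hBexp
  have hcross : (fun ε => laurentSum d (hA - hB) (hA - hB + n) ε *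
      (B ε - laurentSum b hB (hB + n) ε)) =o[𝓝[>] 0] fun ε => ε ^ (hA + n) := by
    refine ((laurentSum_isBigO d _ _).mul_isLittleO hremB).congr' .rfl ?_
    filter_upwards [self_mem_nhdsWithin] with ε (hε : 0 < ε)
    rw [← zpow_add₀ hε.ne']
    ring_nf
  have hpoly := (laurentSum_sub_laurentSum_mul_isBigO hmul n).trans_isLittleO
    (zpow_isLittleO_zpow (lt_add_one _))
  refine ((hremA.add hpoly).sub hcross).congr_left fun ε => ?_
  ring

theorem IsLaurentExpansion.div {n : ℕ}
    (hAexp : IsLaurentExpansion A hA (hA + n) a) (hBexp : IsLaurentExpansion B hB (hB + n) b)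
    (hb : b hB ≠ 0) (hmul : coeffSeries d (hA - hB) * coeffSeries b hB = coeffSeries a hA) :
    IsLaurentExpansion (fun ε => A ε / B ε) (hA - hB) (hA - hB + n) d := by
  refine isLaurentExpansion_iff.2 ⟨by omega, ?_⟩
  refine ((isLittleO_sub_laurentSum_mul hAexp hBexp hmul).mul_isBigO
    (hBexp.inv_isBigO hb)).congr' ?_ ?_
  · filter_upwards [hBexp.eventually_ne_zero hb] with ε hε
    field_simp
  · filter_upwards [self_mem_nhdsWithin] with ε (hε : 0 < ε)
    rw [← zpow_add₀ hε.ne']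
    ring_nf

theorem sum_mul_eq_of_coeffSeries_mul_eq {hD : ℤ}
    (hmul : coeffSeries d hD * coeffSeries b hB = coeffSeries a hA) {r : ℤ} (hr : 0 ≤ r) :
    ∑ i ∈ Finset.Icc 0 r, b (hB + i) * d (hD + r - i) = a (hA + r) := by
  obtain ⟨n, rfl⟩ := Int.eq_ofNat_of_zero_le hr
  have hcoeff := congrArg (PowerSeries.coeff n) hmul
  rw [mul_comm, PowerSeries.coeff_mul, Finset.Nat.sum_antidiagonal_eq_sum_range_succ
    (fun i j => PowerSeries.coeff i (coeffSeries b hB) * PowerSeries.coeff j (coeffSeries d hD))]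
    at hcoeff
  simp only [coeffSeries, PowerSeries.coeff_mk] at hcoeff
  have hreindex := Finset.sum_Icc_int_eq_sum_range (fun i => b (hB + i) * d (hD + n - i)) 0 n
  rw [zero_add] at hreindex
  rw [hreindex, ← hcoeff]
  refine Finset.sum_congr rfl fun k hk => ?_
  rw [Nat.cast_sub (Finset.mem_range_succ_iff.1 hk)]
  ring_nf

/-- The values below the index `hA - hB` are junk. -/
noncomputable def laurentQuotientCoeff (a b : ℤ → ℝ) (hA hB : ℤ) : ℤ → ℝ :=
  fun l => PowerSeries.coeff (l - (hA - hB)).toNat (coeffSeries a hA * (coeffSeries b hB)⁻¹)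

theorem coeffSeries_laurentQuotientCoeff_mul (hb : b hB ≠ 0) :
    coeffSeries (laurentQuotientCoeff a b hA hB) (hA - hB) * coeffSeries b hB =
      coeffSeries a hA := by
  have hquot : coeffSeries (laurentQuotientCoeff a b hA hB) (hA - hB) =
      coeffSeries a hA * (coeffSeries b hB)⁻¹ := by
    ext j
    simp [coeffSeries, laurentQuotientCoeff]
  rw [hquot, mul_assoc, PowerSeries.inv_mul_cancel _ (by simpa [coeffSeries] using hb), mul_one]

theorem laurentQuotientCoeff_eq (hb : b hB ≠ 0) {r : ℤ} (hr : 0 ≤ r) :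
    laurentQuotientCoeff a b hA hB (hA - hB + r) = (1 / b hB) * (a (hA + r) -
      ∑ i ∈ Finset.Icc 1 r, b (hB + i) * laurentQuotientCoeff a b hA hB (hA - hB + r - i)) := by
  have hconv := sum_mul_eq_of_coeffSeries_mul_eq
    (coeffSeries_laurentQuotientCoeff_mul (a := a) (hA := hA) hb) hr
  rw [← Finset.insert_Icc_add_one_left_eq_Icc hr, Finset.sum_insert (by simp), zero_add] at hconv
  simp only [add_zero, sub_zero] at hconv
  field_simp
  linarith

end Quotient

/-- Division rule for Laurent asymptotic expansions (pivotal divisor). -/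
theorem laurent_expansion_div (ε₀ : ℝ) (hε₀ : 0 < ε₀) (A B : ℝ → ℝ) (hA kA hB kB : ℤ)
    (a b : ℤ → ℝ)
    (h1 : IsLaurentExpansion A hA kA a) (h2 : IsLaurentExpansion B hB kB b) (hp : b hB ≠ 0) :
    ∃ ε₀' : ℝ, 0 < ε₀' ∧ ε₀' ≤ ε₀ ∧ (∀ ε ∈ Set.Ioc (0:ℝ) ε₀', B ε ≠ 0) ∧
      ∃ d : ℤ → ℝ,
        IsLaurentExpansion (fun ε => A ε / B ε) (hA - hB) (min (kA - hB) (hA + kB - 2 * hB)) d ∧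
        ∀ r ∈ Finset.Icc (0:ℤ) (min (kA - hB) (hA + kB - 2 * hB) - (hA - hB)),
          d (hA - hB + r)
            = (1 / b hB) *
                (a (hA + r) - ∑ i ∈ Finset.Icc (1:ℤ) r, b (hB + i) * d (hA - hB + r - i)) := by
  set n := (min (kA - hB) (hA + kB - 2 * hB) - (hA - hB)).toNat
  have hn : hA - hB + n = min (kA - hB) (hA + kB - 2 * hB) := by
    have := h1.1; have := h2.1; omega
  have hdiv := IsLaurentExpansion.div (h1.of_le (m := hA + n) (by omega) (by omega))
    (h2.of_le (m := hB + n) (by omega) (by omega)) hp (coeffSeries_laurentQuotientCoeff_mul hp)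
  rw [hn] at hdiv
  obtain ⟨u, hu, hBu⟩ := mem_nhdsGT_iff_exists_Ioc_subset.1 (h2.eventually_ne_zero hp)
  exact ⟨min ε₀ u, lt_min hε₀ hu, min_le_left _ _,
    fun ε hε => hBu ⟨hε.1, hε.2.trans (min_le_right _ _)⟩, _, hdiv,
    fun r hr => laurentQuotientCoeff_eq hp (Finset.mem_Icc.1 hr).1⟩
end

section
/- Let p be an N×N stochastic matrix (N ≥ 2) on state space X that is irreducible, and let r ∈ X. Then the reduced matrix on X \ {r} defined by _r p_{ij} = p_{ij} + p_{ir} p_{rj}/(1 - p_{rr}) is well-defined (p_{rr} < 1) and irreducible on X \ {r}. -/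
/-
Call `i → j` an edge when `p i j > 0`; for a nonnegative matrix, `(p ^ n) i j > 0` for some
`n > 0` exactly when `j` is reachable from `i` along edges, so irreducibility is strong
connectivity of this graph. Row `r` has an edge to some `j ≠ r`, and `p r r + p r j ≤ 1`.
The reduced matrix has an edge `i → j` whenever `p` has the edge `i → j` or the two edges
`i → r → j`; deleting the visits to `r` from a path of `p` (and merging loops at `r`) therefore
leaves a path of the reduced matrix.
-/

/-- A stochastic matrix on a finite state space is irreducible if every state leads
to every state in a positive number of steps with positive probability. -/
def MatIrreducible {X : Type*} [Fintype X] [DecidableEq X] (p : Matrix X X ℝ) : Prop :=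
  ∀ i j : X, ∃ n : ℕ, 0 < n ∧ 0 < (p ^ n) i j

open Relation

namespace Relation

variable {α : Type*} {R : α → α → Prop}

def Bypass (R : α → α → Prop) (r : α) (a b : {x // x ≠ r}) : Prop :=
  R a b ∨ (R a r ∧ R r b)

theorem TransGen.exists_ne_of_ne {a b : α} (h : TransGen R a b) (hb : b ≠ a) :
    ∃ c, c ≠ a ∧ R a c := by
  induction h using TransGen.head_induction_on with
  | single hab => exact ⟨_, hb, hab⟩
  | @head a c hac _ ih =>
    obtain rfl | hca := eq_or_ne c a
    · exact ih hb
    · exact ⟨c, hca, hac⟩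

theorem TransGen.bypass {r : α} {a b : {x // x ≠ r}} (h : TransGen R a b) :
    TransGen (Bypass R r) a b := by
  -- Along a path from `a`, remember the last state before the current visit to `r`.
  suffices key : ∀ c, TransGen R a c → (∀ hc : c ≠ r, TransGen (Bypass R r) a ⟨c, hc⟩) ∧
      (c = r → ∃ d, ReflTransGen (Bypass R r) a d ∧ R d r) from (key b h).1 b.2
  intro c hac
  induction hac with
  | single hac =>
    refine ⟨fun _ => .single (.inl hac), ?_⟩
    rintro rfl
    exact ⟨a, .refl, hac⟩
  | @tail c e _ hce ih =>
    by_cases hc : c = r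
    · obtain ⟨d, had, hdr⟩ := ih.2 hc
      subst hc
      exact ⟨fun _ => TransGen.tail' had (.inr ⟨hdr, hce⟩), fun _ => ⟨d, had, hdr⟩⟩
    · refine ⟨fun _ => (ih.1 hc).tail (.inl hce), ?_⟩
      rintro rfl
      exact ⟨⟨c, hc⟩, (ih.1 hc).to_reflTransGen, hce⟩

end Relation

namespace Matrix

variable {n R : Type*} [Fintype n] [DecidableEq n] [Semiring R] [LinearOrder R]
  [IsStrictOrderedRing R] {A : Matrix n n R}

theorem pow_succ_apply_pos_iff (hA : ∀ i j, 0 ≤ A i j) (k : ℕ) (i j : n) :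
    0 < (A ^ (k + 1)) i j ↔ ∃ l, 0 < (A ^ k) i l ∧ 0 < A l j := by
  rw [pow_succ, mul_apply, Finset.sum_pos_iff_of_nonneg
    fun l _ => mul_nonneg (pow_apply_nonneg hA k i l) (hA l j)]
  simp only [Finset.mem_univ, true_and]
  exact exists_congr fun l => ⟨fun h => ⟨pos_of_mul_pos_left h (hA l j),
    pos_of_mul_pos_right h (pow_apply_nonneg hA k i l)⟩, fun h => mul_pos h.1 h.2⟩

theorem exists_pow_apply_pos_iff_transGen (hA : ∀ i j, 0 ≤ A i j) (i j : n) :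
    (∃ k, 0 < k ∧ 0 < (A ^ k) i j) ↔ TransGen (fun a b => 0 < A a b) i j := by
  constructor
  · rintro ⟨_ | k, hk0, hk⟩
    · omega
    clear hk0
    induction k generalizing j with
    | zero => exact .single (by simpa using hk)
    | succ k ih =>
      obtain ⟨l, hil, hlj⟩ := (pow_succ_apply_pos_iff hA _ i j).1 hk
      exact (ih l hil).tail hlj
  · intro h
    induction h with
    | single hij => exact ⟨1, one_pos, by simpa using hij⟩
    | tail _ hlj ih =>
      obtain ⟨_ | k, hk0, hk⟩ := ih
      · omega
      exact ⟨k + 2, by omega, (pow_succ_apply_pos_iff hA _ _ _).2 ⟨_, hk, hlj⟩⟩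

end Matrix

theorem matIrreducible_iff_transGen {X : Type*} [Fintype X] [DecidableEq X] {p : Matrix X X ℝ}
    (hnn : ∀ i j, 0 ≤ p i j) :
    MatIrreducible p ↔ ∀ i j, TransGen (fun a b => 0 < p a b) i j :=
  forall₂_congr fun i j => Matrix.exists_pow_apply_pos_iff_transGen hnn i j

/-- `_r p`: an excursion into `r` leaves it to `j` with probability
`∑ₙ p r r ^ n * p r j = p r j / (1 - p r r)`. -/
noncomputable def reducedMatrix {X : Type*} (p : Matrix X X ℝ) (r : X) :
    Matrix {i : X // i ≠ r} {i : X // i ≠ r} ℝ :=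
  Matrix.of fun i j => p i.1 j.1 + p i.1 r * p r j.1 / (1 - p r r)

section

variable {X : Type*} {p : Matrix X X ℝ} {r : X}

theorem reducedMatrix_nonneg (hnn : ∀ i j, 0 ≤ p i j) (hlt : p r r < 1)
    (a b : {i : X // i ≠ r}) :
    0 ≤ reducedMatrix p r a b :=
  add_nonneg (hnn _ _) (div_nonneg (mul_nonneg (hnn _ _) (hnn _ _)) (sub_nonneg.2 hlt.le))

theorem reducedMatrix_pos_of_bypass (hnn : ∀ i j, 0 ≤ p i j) (hlt : p r r < 1)
    {a b : {i : X // i ≠ r}} (h : Bypass (fun i j => 0 < p i j) r a b) :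
    0 < reducedMatrix p r a b := by
  have hden : 0 < 1 - p r r := sub_pos.2 hlt
  rcases h with hab | ⟨har, hrb⟩
  · exact add_pos_of_pos_of_nonneg hab (div_nonneg (mul_nonneg (hnn _ _) (hnn _ _)) hden.le)
  · exact add_pos_of_nonneg_of_pos (hnn _ _) (div_pos (mul_pos har hrb) hden)

theorem MatIrreducible.reducedMatrix [Fintype X] [DecidableEq X] (hnn : ∀ i j, 0 ≤ p i j)
    (hirr : MatIrreducible p) (hlt : p r r < 1) : MatIrreducible (reducedMatrix p r) := by
  rw [matIrreducible_iff_transGen hnn] at hirr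
  rw [matIrreducible_iff_transGen (reducedMatrix_nonneg hnn hlt)]
  exact fun a b => TransGen.mono (fun _ _ => reducedMatrix_pos_of_bypass hnn hlt) _ _
    (hirr a b).bypass

theorem apply_add_apply_le_one [Fintype X] (hnn : ∀ i j, 0 ≤ p i j)
    (hrow : ∀ i, ∑ j, p i j = 1) (i : X) {j k : X} (hjk : j ≠ k) : p i j + p i k ≤ 1 :=
  hrow i ▸ Finset.add_le_sum (fun l _ => hnn i l) (Finset.mem_univ _) (Finset.mem_univ _) hjk

theorem MatIrreducible.apply_self_lt_one [Fintype X] [DecidableEq X]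
    (hcard : 1 < Fintype.card X) (hnn : ∀ i j, 0 ≤ p i j)
    (hrow : ∀ i, ∑ j, p i j = 1) (hirr : MatIrreducible p) (r : X) : p r r < 1 := by
  obtain ⟨s, hs⟩ := Fintype.exists_ne_of_one_lt_card hcard r
  obtain ⟨j, hjr, hrj⟩ := ((matIrreducible_iff_transGen hnn).1 hirr r s).exists_ne_of_ne hs
  linarith [apply_add_apply_le_one hnn hrow r hjr.symm]

end

/-- The one-step phase-space reduction of an irreducible stochastic matrix is
well defined (`p r r < 1`) and irreducible on `X \ {r}`. -/
theorem reduced_matrix_irreducible {X : Type*} [Fintype X] [DecidableEq X]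
    (hcard : 2 ≤ Fintype.card X)
    (p : Matrix X X ℝ) (hnn : ∀ i j, 0 ≤ p i j) (hrow : ∀ i, ∑ j, p i j = 1)
    (hirr : MatIrreducible p) (r : X) :
    p r r < 1 ∧
      MatIrreducible (Matrix.of fun i j : {i : X // i ≠ r} =>
        p i.1 j.1 + p i.1 r * p r j.1 / (1 - p r r)) := by
  have hlt : p r r < 1 := hirr.apply_self_lt_one hcard hnn hrow r
  exact ⟨hlt, hirr.reducedMatrix hnn hlt⟩
end

section
/- Let η(t) be a semi-Markov process on finite X with irreducible embedded chain and finite expectations, with initial state i ≠ r. Let _r η(t) be the reduced semi-Markov process on X \ {r} obtained by recording the states at successive hitting times of X \ {r} and the elapsed times between them. Then for any j ≠ r, the first hitting time τ_j of state j by η(t) equals the first hitting time _r τ_j of state j by _r η(t), almost surely; in particular E_i τ_j = E_i (_r τ_j). -/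
/-! The visit indices `ξ` of `X \ {r}` contain every index at which `η` is outside `r`, in
particular the first hitting index `ν` of `j`; minimality of both hitting indices then forces
`ν = ξ rν`. The reduced sojourn times are sums of `κ` over the consecutive blocks
`(ξ (n - 1), ξ n]`, which telescope to the sum over `(0, ξ rν] = (0, ν]`. -/

open Finset

theorem StrictMono.exists_eq_of_forall_between {ξ : ℕ → ℕ} {p : ℕ → Prop} (hξ : StrictMono ξ)
    (hgap : ∀ n m, ξ n < m → m < ξ (n + 1) → ¬ p m) {m : ℕ} (h0 : ξ 0 ≤ m) (hm : p m) :
    ∃ n, ξ n = m := by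
  have hex : ∃ k, m < ξ k := ⟨m + 1, Nat.lt_of_lt_of_le m.lt_succ_self hξ.le_apply⟩
  obtain ⟨n, hn⟩ : ∃ n, Nat.find hex = n + 1 :=
    Nat.exists_eq_add_one.mpr <| Nat.pos_of_ne_zero fun h => by
      have := Nat.find_spec hex
      rw [h] at this
      omega
  have hlt : m < ξ (n + 1) := hn ▸ Nat.find_spec hex
  have hle : ξ n ≤ m := not_lt.mp <| Nat.find_min hex (by omega)
  rcases hle.eq_or_lt with heq | hlt'
  · exact ⟨n, heq⟩
  · exact absurd hm (hgap n m hlt' hlt)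

theorem Finset.sum_Icc_sum_Ioc_consecutive {M : Type*} [AddCommMonoid M] (f : ℕ → M)
    {ξ : ℕ → ℕ} (hξ : Monotone ξ) (N : ℕ) :
    ∑ n ∈ Icc 1 N, ∑ m ∈ Ioc (ξ (n - 1)) (ξ n), f m = ∑ m ∈ Ioc (ξ 0) (ξ N), f m := by
  induction N with
  | zero => simp
  | succ N ih =>
    rw [sum_Icc_succ_top (by omega), ih, Nat.add_sub_cancel,
      sum_Ioc_consecutive f (hξ N.zero_le) (hξ N.le_succ)]

theorem reduced_hitting_time_eq_general {X : Type*} (r j : X) (hjr : j ≠ r)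
    (η : ℕ → X) (κ : ℕ → ℝ)
    (ξ : ℕ → ℕ) (hξ0 : ξ 0 = 0)
    (hξ : ∀ n : ℕ, ξ n < ξ (n + 1) ∧ η (ξ (n + 1)) ≠ r ∧
      ∀ m, ξ n < m → m < ξ (n + 1) → η m = r)
    (ν : ℕ) (hν1 : 1 ≤ ν) (hνj : η ν = j) (hνmin : ∀ m, 1 ≤ m → m < ν → η m ≠ j)
    (rν : ℕ) (hrν1 : 1 ≤ rν) (hrνj : η (ξ rν) = j)
    (hrνmin : ∀ m, 1 ≤ m → m < rν → η (ξ m) ≠ j) :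
    ∑ n ∈ Finset.Icc 1 ν, κ n
      = ∑ n ∈ Finset.Icc 1 rν, ∑ m ∈ Finset.Icc (ξ (n - 1) + 1) (ξ n), κ m := by
  have hmono : StrictMono ξ := strictMono_nat_of_lt_succ fun n => (hξ n).1
  obtain ⟨k, hk⟩ : ∃ k, ξ k = ν :=
    hmono.exists_eq_of_forall_between (p := fun m => η m ≠ r)
      (fun n m h₁ h₂ hm => hm ((hξ n).2.2 m h₁ h₂)) (by omega) (hνj ▸ hjr)
  have hk1 : 1 ≤ k := Nat.one_le_iff_ne_zero.mpr fun h => by subst h; omega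
  have hν_le : ν ≤ ξ rν := not_lt.mp fun h =>
    hνmin _ (hξ0 ▸ hmono hrν1 : 0 < ξ rν) h hrνj
  have hrν_le : rν ≤ k := not_lt.mp fun h => hrνmin k hk1 h (hk ▸ hνj)
  have hν : ν = ξ rν := le_antisymm hν_le (hk ▸ hmono.monotone hrν_le)
  simp only [Finset.Icc_add_one_left_eq_Ioc]
  rw [sum_Icc_sum_Ioc_consecutive κ hmono.monotone, hξ0, hν, ← Finset.Icc_add_one_left_eq_Ioc, zero_add]

/-- Pathwise invariance of hitting times under phase-space reduction: for a trajectory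
`η` of the embedded chain with sojourn times `κ`, starting outside `r`, if `ξ` enumerates
the successive visits to `X \ {r}`, `ν` is the first hitting index of `j ≠ r` by `η`,
and `rν` is the first hitting index of `j` by the reduced chain `n ↦ η (ξ n)`, then the
hitting time `τ_j = ∑_{n=1}^{ν} κ_n` of the original semi-Markov process equals the
hitting time `∑_{n=1}^{rν} rκ_n` of the reduced semi-Markov process, where
`rκ_n = ∑_{m=ξ(n-1)+1}^{ξ n} κ_m`. -/
theorem reduced_hitting_time_eq {X : Type*} (r j : X) (hjr : j ≠ r)
    (η : ℕ → X) (κ : ℕ → ℝ) (hη0 : η 0 ≠ r)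
    (ξ : ℕ → ℕ) (hξ0 : ξ 0 = 0)
    (hξ : ∀ n : ℕ, ξ n < ξ (n + 1) ∧ η (ξ (n + 1)) ≠ r ∧
      ∀ m, ξ n < m → m < ξ (n + 1) → η m = r)
    (ν : ℕ) (hν1 : 1 ≤ ν) (hνj : η ν = j) (hνmin : ∀ m, 1 ≤ m → m < ν → η m ≠ j)
    (rν : ℕ) (hrν1 : 1 ≤ rν) (hrνj : η (ξ rν) = j)
    (hrνmin : ∀ m, 1 ≤ m → m < rν → η (ξ m) ≠ j) :
    ∑ n ∈ Finset.Icc 1 ν, κ n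
      = ∑ n ∈ Finset.Icc 1 rν, ∑ m ∈ Finset.Icc (ξ (n - 1) + 1) (ξ n), κ m :=
  reduced_hitting_time_eq_general r j hjr η κ ξ hξ0 hξ ν hν1 hνj hνmin rν hrν1 hrνj hrνmin
end

section
/- Suppose e_i(ε) > 0 and E_{ii}(ε) ≥ e_i(ε) > 0 for ε ∈ (0, ε₀], e_i(ε) has a pivotal Laurent (m⁻, m⁺)-expansion with leading coefficient b > 0, and E_{ii}(ε) has a pivotal Laurent (M⁻, M⁺)-expansion with leading coefficient B > 0. Then M⁻ ≤ m⁻, and the ratio π_i(ε) = e_i(ε)/E_{ii}(ε) has a pivotal Laurent (n⁻, n⁺)-expansion with n⁻ = m⁻ - M⁻ ≥ 0, n⁺ = min(m⁺ - M⁻, m⁻ + M⁺ - 2M⁻), and positive leading coefficient b/B; in particular π_i(ε) → b/B > 0 as ε → 0⁺ if n⁻ = 0, and π_i(ε) → 0 if n⁻ > 0. -/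
open Filter Set

/-! Write an `(h, h + K)`-expansion as `A ε = ε ^ h * (P ε + o(ε ^ K))`, where `P` is the
polynomial with coefficients `a h, …, a (h + K)`. For a quotient of two such expansions with
`Q 0 ≠ 0`, truncating the power series `P / Q` at degree `N = min K K'` gives
`P = T * Q + X ^ (N + 1) * R`, hence `A / B = ε ^ (h - h') * (T ε + o(ε ^ N))`, and the
coefficients of `T` form the expansion of the quotient. The leading orders compare as
`M⁻ ≤ m⁻` because otherwise `E ε / ε ^ m⁻ → 0` while `e ε / ε ^ m⁻ → b > 0` and `e ≤ E`. -/

open Topology Polynomial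

theorem Polynomial.exists_eq_mul_add_X_pow_mul {K : Type*} [Field K] (p q : K[X])
    (hq : q.coeff 0 ≠ 0) (N : ℕ) :
    ∃ t r : K[X], t.natDegree ≤ N ∧ t.coeff 0 = p.coeff 0 / q.coeff 0 ∧
      p = t * q + X ^ (N + 1) * r := by
  set u : PowerSeries K := p * (q : PowerSeries K)⁻¹
  have hq' : PowerSeries.constantCoeff (q : PowerSeries K) ≠ 0 := by
    rwa [constantCoeff_coe]
  have hu : u * q = p := by rw [mul_assoc, PowerSeries.inv_mul_cancel _ hq', mul_one]
  set t := PowerSeries.trunc (N + 1) u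
  have hdeg : t.natDegree ≤ N := Nat.lt_succ_iff.mp (PowerSeries.natDegree_trunc_lt u N)
  have ht0 : t.coeff 0 = p.coeff 0 / q.coeff 0 := by
    simp [t, u, PowerSeries.coeff_trunc, div_eq_mul_inv, PowerSeries.constantCoeff_inv]
  have hlow : ∀ d < N + 1, (p - t * q).coeff d = 0 := by
    intro d hd
    have := congrArg (fun f : K[X] => f.coeff d)
      (PowerSeries.trunc_trunc_mul (n := N + 1) u q)
    simp only [PowerSeries.coeff_trunc, if_pos hd, hu, coeff_coe] at this
    rw [coeff_sub, ← coeff_coe (t * q), coe_mul, this, sub_self]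
  obtain ⟨r, hr⟩ := X_pow_dvd_iff.mpr hlow
  exact ⟨t, r, hdeg, ht0, by rw [← hr]; ring⟩

theorem Finset.sum_Icc_add_natCast {M : Type*} [AddCommMonoid M] (f : ℤ → M) (h : ℤ) (K : ℕ) :
    ∑ l ∈ Finset.Icc h (h + K), f l = ∑ j ∈ Finset.range (K + 1), f (h + j) := by
  refine (Finset.sum_nbij' (fun j : ℕ => h + j) (fun l => (l - h).toNat) ?_ ?_ ?_ ?_
    fun _ _ => rfl).symm <;>
    (intro x hx; simp only [Finset.mem_range, Finset.mem_Icc] at hx ⊢; omega)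

noncomputable def laurentPoly (a : ℤ → ℝ) (h : ℤ) (K : ℕ) : ℝ[X] :=
  ∑ j ∈ Finset.range (K + 1), C (a (h + j)) * X ^ j

@[simp]
theorem laurentPoly_coeff_zero (a : ℤ → ℝ) (h : ℤ) (K : ℕ) :
    (laurentPoly a h K).coeff 0 = a h := by
  simp [laurentPoly, finsetSum_coeff, coeff_X_pow]

theorem sum_Icc_eq_zpow_mul_eval_laurentPoly (a : ℤ → ℝ) (h : ℤ) (K : ℕ) {ε : ℝ} (hε : ε ≠ 0) :
    ∑ l ∈ Finset.Icc h (h + K), a l * ε ^ l = ε ^ h * (laurentPoly a h K).eval ε := by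
  simp only [Finset.sum_Icc_add_natCast, laurentPoly, eval_finsetSum, eval_C_mul, eval_X_pow,
    Finset.mul_sum, zpow_add₀ hε, zpow_natCast]
  exact Finset.sum_congr rfl fun j _ => by ring

theorem laurentPoly_of_natDegree_le {p : ℝ[X]} {K : ℕ} (hp : p.natDegree ≤ K) (h : ℤ) :
    laurentPoly (fun l => p.coeff (l - h).toNat) h K = p := by
  conv_rhs => rw [p.as_sum_range_C_mul_X_pow' (Nat.lt_succ_of_le hp)]
  simp [laurentPoly]

theorem isLaurentExpansion_add_natCast_iff {A : ℝ → ℝ} {a : ℤ → ℝ} {h : ℤ} {K : ℕ} :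
    IsLaurentExpansion A h (h + K) a ↔
      Tendsto (fun ε => (A ε / ε ^ h - (laurentPoly a h K).eval ε) / ε ^ K) (𝓝[>] 0) (𝓝 0) := by
  rw [IsLaurentExpansion, and_iff_right (by omega)]
  refine tendsto_congr' ?_
  filter_upwards [self_mem_nhdsWithin] with ε (hε : 0 < ε)
  rw [sum_Icc_eq_zpow_mul_eval_laurentPoly a h K hε.ne', zpow_add₀ hε.ne', zpow_natCast]
  field_simp

theorem tendsto_div_pow_of_le {R : ℝ → ℝ} {M N : ℕ} (hMN : M ≤ N)
    (hR : Tendsto (fun ε => R ε / ε ^ N) (𝓝[>] 0) (𝓝 0)) :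
    Tendsto (fun ε => R ε / ε ^ M) (𝓝[>] 0) (𝓝 0) := by
  have hpow : Tendsto (fun ε : ℝ => ε ^ (N - M)) (𝓝[>] 0) (𝓝 (0 ^ (N - M))) :=
    ((continuous_pow _).tendsto 0).mono_left nhdsWithin_le_nhds
  refine (zero_mul ((0 : ℝ) ^ (N - M)) ▸ hR.mul hpow).congr' ?_
  obtain ⟨d, rfl⟩ := Nat.exists_eq_add_of_le hMN
  filter_upwards [self_mem_nhdsWithin] with ε (hε : 0 < ε)
  rw [Nat.add_sub_cancel_left, pow_add]
  field_simp

theorem Polynomial.tendsto_eval_nhdsGT (p : ℝ[X]) (x : ℝ) :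
    Tendsto (fun ε => p.eval ε) (𝓝[>] x) (𝓝 (p.eval x)) :=
  (p.continuous.tendsto x).mono_left nhdsWithin_le_nhds

theorem tendsto_div_sub_eval_div_pow {f g : ℝ → ℝ} {P Q T R : ℝ[X]} {N : ℕ}
    (hf : Tendsto (fun ε => (f ε - P.eval ε) / ε ^ N) (𝓝[>] 0) (𝓝 0))
    (hg : Tendsto (fun ε => (g ε - Q.eval ε) / ε ^ N) (𝓝[>] 0) (𝓝 0))
    (hQ : Q.eval 0 ≠ 0) (hPQ : P = T * Q + X ^ (N + 1) * R) :
    Tendsto (fun ε => (f ε / g ε - T.eval ε) / ε ^ N) (𝓝[>] 0) (𝓝 0) := by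
  subst hPQ
  have hg_lim : Tendsto g (𝓝[>] 0) (𝓝 (Q.eval 0)) := by
    simpa using (tendsto_div_pow_of_le (Nat.zero_le N) hg).add (tendsto_eval_nhdsGT Q 0)
  have key := (((tendsto_eval_nhdsGT (X * R) 0).add hf).sub
    ((tendsto_eval_nhdsGT T 0).mul hg)).div hg_lim hQ
  simp only [eval_mul, eval_X, zero_mul, add_zero, mul_zero, sub_zero, zero_div] at key
  refine key.congr' ?_
  filter_upwards [self_mem_nhdsWithin, hg_lim.eventually_ne hQ] with ε (hε : 0 < ε) hgε
  simp only [Pi.div_apply, eval_add, eval_mul, eval_pow, eval_X, pow_succ]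
  field_simp
  ring

theorem tendsto_div_zpow_of_lt {F : ℝ → ℝ} {i j : ℤ} {L : ℝ}
    (hF : Tendsto (fun ε => F ε / ε ^ j) (𝓝[>] 0) (𝓝 L)) (hij : i < j) :
    Tendsto (fun ε => F ε / ε ^ i) (𝓝[>] 0) (𝓝 0) := by
  have hpow : Tendsto (fun ε : ℝ => ε ^ (j - i)) (𝓝[>] 0) (𝓝 0) := by
    simpa [zero_zpow _ (sub_pos.mpr hij).ne'] using
      (continuousAt_zpow₀ (0 : ℝ) (j - i) (Or.inr (sub_pos.mpr hij).le)).tendsto.mono_left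
        nhdsWithin_le_nhds
  refine (mul_zero L ▸ hF.mul hpow).congr' ?_
  filter_upwards [self_mem_nhdsWithin] with ε (hε : 0 < ε)
  rw [zpow_sub₀ hε.ne']
  field_simp

namespace IsLaurentExpansion

variable {A B : ℝ → ℝ} {h k h' k' : ℤ} {a b : ℤ → ℝ}

theorem tendsto_div_zpow (hA : IsLaurentExpansion A h k a) :
    Tendsto (fun ε => A ε / ε ^ h) (𝓝[>] 0) (𝓝 (a h)) := by
  obtain ⟨K, rfl⟩ := Int.le.dest hA.1
  simpa [← coeff_zero_eq_eval_zero] using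
    (tendsto_div_pow_of_le (Nat.zero_le K) (isLaurentExpansion_add_natCast_iff.mp hA)).add
      (tendsto_eval_nhdsGT (laurentPoly a h K) 0)

theorem tendsto_of_eq_zero (hA : IsLaurentExpansion A h k a) (hh : h = 0) :
    Tendsto A (𝓝[>] 0) (𝓝 (a h)) := by
  simpa [hh] using hA.tendsto_div_zpow

theorem tendsto_zero_of_pos (hA : IsLaurentExpansion A h k a) (hh : 0 < h) :
    Tendsto A (𝓝[>] 0) (𝓝 0) := by
  simpa using tendsto_div_zpow_of_lt hA.tendsto_div_zpow hh

theorem le_of_eventuallyLE (hA : IsLaurentExpansion A h k a) (hB : IsLaurentExpansion B h' k' b)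
    (ha : 0 < a h) (hAB : A ≤ᶠ[𝓝[>] 0] B) : h' ≤ h := by
  by_contra! hlt
  have hAB' : (fun ε => A ε / ε ^ h) ≤ᶠ[𝓝[>] 0] fun ε => B ε / ε ^ h := by
    filter_upwards [hAB, self_mem_nhdsWithin] with ε hε (hε0 : 0 < ε)
    gcongr
  exact ha.not_ge (le_of_tendsto_of_tendsto hA.tendsto_div_zpow
    (tendsto_div_zpow_of_lt hB.tendsto_div_zpow hlt) hAB')

theorem div_s19 (hA : IsLaurentExpansion A h k a) (hB : IsLaurentExpansion B h' k' b)
    (hb : b h' ≠ 0) :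
    ∃ c : ℤ → ℝ,
      IsLaurentExpansion (fun ε => A ε / B ε) (h - h') (min (k - h') (h + k' - 2 * h')) c ∧
      c (h - h') = a h / b h' := by
  obtain ⟨K, rfl⟩ := Int.le.dest hA.1
  obtain ⟨K', rfl⟩ := Int.le.dest hB.1
  obtain ⟨T, R, hT, hT0, hPQ⟩ := (laurentPoly a h K).exists_eq_mul_add_X_pow_mul
    (laurentPoly b h' K') (by simpa using hb) (min K K')
  refine ⟨fun l => T.coeff (l - (h - h')).toNat, ?_, by simpa using hT0⟩
  have hk : min (h + K - h') (h + (h' + K') - 2 * h') = h - h' + (min K K' : ℕ) := by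
    push_cast; omega
  rw [hk, isLaurentExpansion_add_natCast_iff, laurentPoly_of_natDegree_le hT]
  have hf := tendsto_div_pow_of_le (min_le_left K K') (isLaurentExpansion_add_natCast_iff.mp hA)
  have hg := tendsto_div_pow_of_le (min_le_right K K') (isLaurentExpansion_add_natCast_iff.mp hB)
  refine (tendsto_div_sub_eval_div_pow hf hg (by simpa [← coeff_zero_eq_eval_zero] using hb)
    hPQ).congr' ?_
  filter_upwards [self_mem_nhdsWithin] with ε (hε : 0 < ε)
  rw [zpow_sub₀ hε.ne', div_div_div_comm]

end IsLaurentExpansion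

/-- Asymptotic expansion for the stationary probability `π_i(ε) = e_i(ε)/E_{ii}(ε)`:
if `0 < e_i(ε) ≤ E_{ii}(ε)` and both have pivotal Laurent expansions with positive
leading coefficients `b` and `B`, then `M⁻ ≤ m⁻` and the ratio has a pivotal Laurent
`(m⁻ - M⁻, min(m⁺ - M⁻, m⁻ + M⁺ - 2M⁻))`-expansion with positive leading coefficient
`b/B`; the ratio tends to `b/B` if `m⁻ - M⁻ = 0` and to `0` if `m⁻ - M⁻ > 0`. -/
theorem stationary_probability_expansion (ε₀ : ℝ) (hε₀ : 0 < ε₀) (e E : ℝ → ℝ)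
    (m₁ m₂ M₁ M₂ : ℤ) (bc Bc : ℤ → ℝ)
    (hpos : ∀ ε ∈ Set.Ioc (0:ℝ) ε₀, 0 < e ε ∧ e ε ≤ E ε)
    (he : IsLaurentExpansion e m₁ m₂ bc) (hbpos : 0 < bc m₁)
    (hE : IsLaurentExpansion E M₁ M₂ Bc) (hBpos : 0 < Bc M₁) :
    M₁ ≤ m₁ ∧
    ∃ c : ℤ → ℝ,
      IsLaurentExpansion (fun ε => e ε / E ε)
        (m₁ - M₁) (min (m₂ - M₁) (m₁ + M₂ - 2 * M₁)) c ∧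
      c (m₁ - M₁) = bc m₁ / Bc M₁ ∧ 0 < c (m₁ - M₁) ∧ 0 ≤ m₁ - M₁ ∧
      (m₁ - M₁ = 0 →
        Tendsto (fun ε => e ε / E ε) (nhdsWithin 0 (Set.Ioi 0))
          (nhds (bc m₁ / Bc M₁))) ∧
      (0 < m₁ - M₁ →
        Tendsto (fun ε => e ε / E ε) (nhdsWithin 0 (Set.Ioi 0)) (nhds 0)) := by
  have hle : e ≤ᶠ[𝓝[>] 0] E := by
    filter_upwards [Ioc_mem_nhdsGT hε₀] with ε hε using (hpos ε hε).2
  have hMm : M₁ ≤ m₁ := he.le_of_eventuallyLE hE hbpos hle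
  obtain ⟨c, hc, hc₀⟩ := he.div_s19 hE hBpos.ne'
  exact ⟨hMm, c, hc, hc₀, hc₀ ▸ div_pos hbpos hBpos, sub_nonneg.mpr hMm,
    fun h0 => hc₀ ▸ hc.tendsto_of_eq_zero h0, hc.tendsto_zero_of_pos⟩
end
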